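/- Let U : H_S → H_{A₁} ⊗ ⋯ ⊗ H_{A_l} be an isometry, let ρ be a state on H_S, and let σ be a separable state on H_{A₁} ⊗ ⋯ ⊗ H_{A_l} with ‖U ρ U† − σ‖₁ ≤ δ. Then there exist unit vectors ψ ∈ H_S and φ_i ∈ H_{A_i} (i = 1,…,l) such that ‖U |ψ⟩⟨ψ| U† − |φ₁⟩⟨φ₁| ⊗ ⋯ ⊗ |φ_l⟩⟨φ_l|‖₁ ≤ 4√δ. -/

import Mathlib

open scoped Kronecker ComplexOrder
open Matrix

/-- The positive semidefinite square root (removed from Mathlib; restored with its old definition). -/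
noncomputable def Matrix.PosSemidef.sqrt {n 𝕜 : Type*} [Fintype n] [DecidableEq n] [RCLike 𝕜]
    {A : Matrix n n 𝕜} (hA : A.PosSemidef) : Matrix n n 𝕜 :=
  (hA.1.eigenvectorUnitary : Matrix n n 𝕜) * diagonal ((↑) ∘ (√·) ∘ hA.1.eigenvalues) *
    (star hA.1.eigenvectorUnitary : Matrix n n 𝕜)

/-- The trace norm (Schatten 1-norm) of a complex matrix: `Tr √(Xᴴ X)`. -/
noncomputable def traceNorm {n : Type*} [Fintype n] [DecidableEq n] (X : Matrix n n ℂ) : ℝ :=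
  ((Matrix.posSemidef_conjTranspose_mul_self X).sqrt.trace).re

/-- A quantum state: a positive semidefinite matrix with unit trace. -/
def IsState {n : Type*} [Fintype n] (ρ : Matrix n n ℂ) : Prop :=
  ρ.PosSemidef ∧ ρ.trace = 1

/-- The tensor product `N 0 ⊗ ⋯ ⊗ N (l-1)` of a family of square matrices, acting on
the tensor product space indexed by dependent functions. -/
def tensorFamily {l : ℕ} {A : Fin l → Type*}
    (N : ∀ i, Matrix (A i) (A i) ℂ) : Matrix (∀ i, A i) (∀ i, A i) ℂ :=
  Matrix.of fun x y => ∏ i, N i (x i) (y i)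

/-- A multipartite separable state across the cut `A₁ : ⋯ : A_l`: a finite convex
combination of tensor products of states. -/
def SeparableFamilyState {l : ℕ} {A : Fin l → Type*} [∀ i, Fintype (A i)]
    (σ : Matrix (∀ i, A i) (∀ i, A i) ℂ) : Prop :=
  ∃ (m : ℕ) (p : Fin m → ℝ) (τ : ∀ _ : Fin m, ∀ i, Matrix (A i) (A i) ℂ),
    (∀ y, 0 ≤ p y) ∧ (∑ y, p y = 1) ∧ (∀ y i, IsState (τ y i)) ∧
    σ = ∑ y, (p y : ℂ) • tensorFamily (τ y)

/-- Insert a value at coordinate `i₀` into an assignment of the remaining coordinates. -/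
def insertAt {l : ℕ} {A : Fin l → Type*} (i₀ : Fin l) (a : A i₀)
    (w : ∀ j : {j : Fin l // j ≠ i₀}, A j.1) : ∀ j, A j :=
  fun j => if h : j = i₀ then cast (congrArg A h).symm a else w ⟨j, h⟩

/-- Partial trace of a multipartite operator onto the `i₀`-th tensor factor
(tracing out all other factors). -/
noncomputable def ptraceAt {l : ℕ} {A : Fin l → Type*} [∀ i, Fintype (A i)]
    [∀ i, DecidableEq (A i)] (i₀ : Fin l)
    (X : Matrix (∀ j, A j) (∀ j, A j) ℂ) : Matrix (A i₀) (A i₀) ℂ :=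
  Matrix.of fun a a' =>
    ∑ w : ∀ j : {j : Fin l // j ≠ i₀}, A j.1, X (insertAt i₀ a w) (insertAt i₀ a' w)

/-- The multipartite one-way LOCC norm of an operator on `H_{A₁} ⊗ ⋯ ⊗ H_{A_l}`,
with distinguished (receiving) party `i₀`: the supremum over finite POVMs
`{Λ^{(i)}_{m_i}}` on each `H_{A_i}`, `i ≠ i₀`, of
`Σ_{m} ‖Tr_{rest}((I_{A_{i₀}} ⊗ ⊗_{i ≠ i₀} Λ^{(i)}_{m_i}) X)‖₁`. -/
noncomputable def oneWayLOCCNormFam {l : ℕ} {A : Fin l → Type*} [∀ i, Fintype (A i)]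
    [∀ i, DecidableEq (A i)] (i₀ : Fin l)
    (X : Matrix (∀ i, A i) (∀ i, A i) ℂ) : ℝ :=
  sSup { r : ℝ | ∃ (M : Fin l → ℕ) (Λ : ∀ i, Fin (M i) → Matrix (A i) (A i) ℂ),
    M i₀ = 1 ∧ (∀ m, Λ i₀ m = 1) ∧
    (∀ i, i ≠ i₀ → ∀ m, (Λ i m).PosSemidef) ∧
    (∀ i, i ≠ i₀ → ∑ m, Λ i m = 1) ∧
    r = ∑ m : ∀ i, Fin (M i),
      traceNorm (ptraceAt i₀ (tensorFamily (fun i => Λ i (m i)) * X)) }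

/-- `k`-extendibility of a multipartite state `ρ` on `H_{A₁} ⊗ ⋯ ⊗ H_{A_l}` (with
respect to the cut `A₁ : ⋯ : A_l`): there is a state `ω` on `⊗_i H_{A_i}^{⊗k}`
invariant under every permutation of the `k` copies within each group, whose partial
trace over all but the first copy in each group equals `ρ`. -/
def KExtendible {l : ℕ} {A : Fin l → Type*} [∀ i, Fintype (A i)]
    (k : ℕ) (hk : 0 < k) (ρ : Matrix (∀ i, A i) (∀ i, A i) ℂ) : Prop :=
  ∃ ω : Matrix (∀ i, Fin k → A i) (∀ i, Fin k → A i) ℂ,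
    IsState ω ∧
    (∀ π : ∀ _ : Fin l, Equiv.Perm (Fin k), ∀ x y : ∀ i, Fin k → A i,
      ω (fun i j => x i (π i j)) (fun i j => y i (π i j)) = ω x y) ∧
    (∀ x y : ∀ i, A i, ρ x y =
      ∑ w : ∀ i : Fin l, {j : Fin k // j ≠ ⟨0, hk⟩} → A i,
        ω (fun i j => if h : j = ⟨0, hk⟩ then x i else w i ⟨j, h⟩)
          (fun i j => if h : j = ⟨0, hk⟩ then y i else w i ⟨j, h⟩))

/-- The outer product `|v⟩⟨v|`. -/
def outer {n : Type*} (v : n → ℂ) : Matrix n n ℂ :=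
  Matrix.of fun i j => v i * star (v j)

/-- A unit vector. -/
def IsUnitVec {n : Type*} [Fintype n] (v : n → ℂ) : Prop :=
  ∑ i, star (v i) * v i = 1

/-!
Let `P = UU†`, the projection onto the range of `U`. As `0 ≤ P ≤ 1` and `Tr (P UρU†) = 1`,
`Re Tr (P X) ≤ ‖X‖₁` applied to `X = UρU† − σ` gives `Re Tr (Pσ) ≥ 1 − δ`. The functional
`X ↦ Re Tr (P X)` is linear, so over the separable states it is maximised at a product pure state
`|Φ⟩⟨Φ|`, `Φ = φ₁ ⊗ ⋯ ⊗ φ_l`, whence `c := ⟨Φ|P|Φ⟩ ≥ 1 − δ`. Normalising `U†Φ` to `ψ` gives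
`⟨Uψ|Φ⟩ = √c`, and for unit vectors `‖|a⟩⟨a| − |b⟩⟨b|‖₁ = 2 √(1 − |⟨a|b⟩|²)`, so the distance
is `2 √(1 − c) ≤ 2 √δ`.
-/

namespace Matrix

variable {n : Type*} [Fintype n] [DecidableEq n]

open scoped MatrixOrder in
theorem PosSemidef.sqrt_eq_of_sq_eq {𝕜 : Type*} [RCLike 𝕜] {A B : Matrix n n 𝕜}
    (hB : B.PosSemidef) (hA : A.PosSemidef) (h : A ^ 2 = B) : hB.sqrt = A := by
  have hcfc : hB.sqrt = CFC.sqrt B := by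
    rw [CFC.sqrt_eq_cfc, cfc_nnreal_eq_real _ B, hB.1.cfc_eq]
    simp only [IsHermitian.cfc, PosSemidef.sqrt]
    congr 3
    funext i
    simp [max_eq_left (hB.eigenvalues_nonneg i)]
  rw [hcfc]
  exact CFC.sqrt_unique (by rw [← h, sq]) hA.nonneg

theorem posSemidef_one_sub_mul_conjTranspose {𝕜 m : Type*} [RCLike 𝕜] [Fintype m]
    [DecidableEq m] {U : Matrix n m 𝕜} (hU : Uᴴ * U = 1) : (1 - U * Uᴴ).PosSemidef := by
  have hproj : (1 - U * Uᴴ)ᴴ * (1 - U * Uᴴ) = 1 - U * Uᴴ := by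
    have hidem : U * Uᴴ * (U * Uᴴ) = U * Uᴴ := by
      rw [Matrix.mul_assoc, ← Matrix.mul_assoc Uᴴ, hU, Matrix.one_mul]
    rw [conjTranspose_sub, conjTranspose_one, conjTranspose_mul, conjTranspose_conjTranspose,
      sub_mul, mul_sub, mul_sub, hidem]
    simp
  exact hproj ▸ posSemidef_conjTranspose_mul_self _

end Matrix

section TraceNorm

variable {n : Type*} [Fintype n] [DecidableEq n]

theorem traceNorm_eq_re_trace_of_sq_eq {X B : Matrix n n ℂ} (hB : B.PosSemidef)
    (h : B ^ 2 = Xᴴ * X) : traceNorm X = B.trace.re := by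
  rw [traceNorm, (posSemidef_conjTranspose_mul_self X).sqrt_eq_of_sq_eq hB h]

theorem traceNorm_zero : traceNorm (0 : Matrix n n ℂ) = 0 := by
  simpa using traceNorm_eq_re_trace_of_sq_eq (X := (0 : Matrix n n ℂ)) .zero (by simp)

open scoped MatrixOrder in
theorem traceNorm_of_isHermitian {T : Matrix n n ℂ} (hT : T.IsHermitian) :
    traceNorm T = ∑ i, |hT.eigenvalues i| := by
  have hsq : cfc (fun x : ℝ => |x|) T ^ 2 = Tᴴ * T := by
    rw [hT.eq, ← sq, ← cfc_pow _ 2 T, ← cfc_pow_id (R := ℝ) T 2]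
    simp only [sq_abs]
  have hpos : (cfc (fun x : ℝ => |x|) T).PosSemidef :=
    nonneg_iff_posSemidef.mp (cfc_nonneg fun x _ => abs_nonneg x)
  rw [traceNorm_eq_re_trace_of_sq_eq hpos hsq, hT.cfc_eq, IsHermitian.cfc,
    Unitary.conjStarAlgAut_apply, trace_mul_cycle, Unitary.coe_star_mul_self, one_mul,
    trace_diagonal, Complex.re_sum]
  rfl

/-- For `c = 0` both sides vanish, since then `X = 0`. -/
theorem traceNorm_eq_of_mul_self_mul_self {X : Matrix n n ℂ} (hX : Xᴴ = X) {c : ℝ} (hc : 0 ≤ c)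
    (h : X * (X * X) = (c : ℂ) • X) : traceNorm X = (X * X).trace.re / √c := by
  have hXX : (X * X).PosSemidef := by simpa only [hX] using posSemidef_conjTranspose_mul_self X
  rcases hc.eq_or_lt with rfl | hc
  · have hX0 : X = 0 := by
      have h4 : (X * X)ᴴ * (X * X) = 0 := by
        rw [conjTranspose_mul, hX, Matrix.mul_assoc, h]
        simp
      rw [conjTranspose_mul_self_eq_zero] at h4
      rw [← conjTranspose_mul_self_eq_zero, hX, h4]
    simp [hX0, traceNorm_zero]
  · have hsq : ((√c)⁻¹ • (X * X)) ^ 2 = Xᴴ * X := by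
      rw [sq, smul_mul_smul, Matrix.mul_assoc, h, Matrix.mul_smul, Complex.coe_smul, smul_smul,
        ← mul_inv, Real.mul_self_sqrt hc.le, inv_mul_cancel₀ hc.ne', one_smul, hX]
    rw [traceNorm_eq_re_trace_of_sq_eq (hXX.smul (inv_nonneg.mpr (Real.sqrt_nonneg c))) hsq,
      trace_smul, Complex.smul_re, smul_eq_mul, inv_mul_eq_div]

theorem re_trace_mul_le_traceNorm {Q T : Matrix n n ℂ} (hQ : Q.PosSemidef)
    (hQ1 : (1 - Q).PosSemidef) (hT : T.IsHermitian) : (Q * T).trace.re ≤ traceNorm T := by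
  set V : Matrix n n ℂ := (hT.eigenvectorUnitary : Matrix n n ℂ)
  set R := star V * Q * V
  have hR : R.PosSemidef := hQ.conjTranspose_mul_mul_same V
  have hR1 : (1 - R).PosSemidef := by
    have : 1 - R = star V * (1 - Q) * V := by
      rw [Matrix.mul_sub, Matrix.sub_mul, Matrix.mul_one, Unitary.coe_star_mul_self]
    exact this ▸ hQ1.conjTranspose_mul_mul_same V
  have htrace : (Q * T).trace = ∑ i, R i i * hT.eigenvalues i := by
    conv_lhs => rw [hT.spectral_theorem, Unitary.conjStarAlgAut_apply]
    rw [← Matrix.mul_assoc, ← Matrix.mul_assoc, trace_mul_comm, ← Matrix.mul_assoc,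
      ← Matrix.mul_assoc]
    simp [trace, mul_diagonal, R, V]
  rw [traceNorm_of_isHermitian hT, htrace, Complex.re_sum]
  refine Finset.sum_le_sum fun i _ => ?_
  have h0 : 0 ≤ (R i i).re := (Complex.nonneg_iff.mp (hR.diag_nonneg (i := i))).1
  have h1 : (R i i).re ≤ 1 := by
    have := (Complex.nonneg_iff.mp (hR1.diag_nonneg (i := i))).1
    simp only [Matrix.sub_apply, one_apply_eq, Complex.sub_re, Complex.one_re] at this
    linarith
  rw [Complex.re_mul_ofReal, mul_comm]
  calc hT.eigenvalues i * (R i i).re ≤ |hT.eigenvalues i| * (R i i).re :=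
        mul_le_mul_of_nonneg_right (le_abs_self _) h0
    _ ≤ |hT.eigenvalues i| := mul_le_of_le_one_right (abs_nonneg _) h1

end TraceNorm

section Outer

theorem outer_eq_vecMulVec {n : Type*} (v : n → ℂ) : outer v = vecMulVec v (star v) := rfl

variable {n : Type*} [Fintype n]

theorem isUnitVec_iff {v : n → ℂ} : IsUnitVec v ↔ star v ⬝ᵥ v = 1 := Iff.rfl

theorem trace_mul_outer (Q : Matrix n n ℂ) (v : n → ℂ) :
    (Q * outer v).trace = star v ⬝ᵥ Q *ᵥ v := by
  rw [outer_eq_vecMulVec, mul_vecMulVec, trace_vecMulVec, dotProduct_comm]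

theorem mul_outer_mul_conjTranspose {m : Type*} [Fintype m] (U : Matrix m n ℂ) (ψ : n → ℂ) :
    U * outer ψ * Uᴴ = outer (U *ᵥ ψ) := by
  rw [outer_eq_vecMulVec, outer_eq_vecMulVec, mul_vecMulVec, vecMulVec_mul, star_mulVec]

theorem star_mulVec_dotProduct {m : Type*} [Fintype m] (U : Matrix m n ℂ) (ψ : n → ℂ)
    (φ : m → ℂ) : star (U *ᵥ ψ) ⬝ᵥ φ = star ψ ⬝ᵥ Uᴴ *ᵥ φ := by
  rw [star_mulVec, dotProduct_mulVec]

theorem IsUnitVec.mulVec {m : Type*} [Fintype m] [DecidableEq n] {U : Matrix m n ℂ}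
    (hU : Uᴴ * U = 1) {ψ : n → ℂ} (hψ : IsUnitVec ψ) : IsUnitVec (U *ᵥ ψ) := by
  rwa [isUnitVec_iff, star_mulVec_dotProduct, mulVec_mulVec, hU, one_mulVec]

variable [DecidableEq n]

theorem traceNorm_outer_sub_outer {a b : n → ℂ} (ha : IsUnitVec a) (hb : IsUnitVec b) :
    traceNorm (outer a - outer b) = 2 * √(1 - ‖star a ⬝ᵥ b‖ ^ 2) := by
  rw [isUnitVec_iff] at ha hb
  set s := star a ⬝ᵥ b with hs
  have hba : star b ⬝ᵥ a = star s := by rw [star_dotProduct]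
  set X := outer a - outer b
  have hX : Xᴴ = X := by simp [X, outer_eq_vecMulVec]
  have hsq : X * X = vecMulVec a (star a) + vecMulVec b (star b)
      - s • vecMulVec a (star b) - star s • vecMulVec b (star a) := by
    simp only [X, outer_eq_vecMulVec, sub_mul, mul_sub, vecMulVec_mul_vecMulVec, ha, hb, hba,
      vecMulVec_smul, one_smul]
    abel
  have hnorm : s * star s = ((‖s‖ ^ 2 : ℝ) : ℂ) := by
    rw [Complex.star_def, Complex.mul_conj, Complex.normSq_eq_norm_sq]
  have hcube : X * (X * X) = ((1 - ‖s‖ ^ 2 : ℝ) : ℂ) • X := by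
    rw [hsq]
    simp only [X, outer_eq_vecMulVec, sub_mul, mul_sub, mul_add, Matrix.mul_smul,
      vecMulVec_mul_vecMulVec, ha, hb, hba, ← hs, vecMulVec_smul, one_smul, smul_smul]
    rw [Complex.ofReal_sub, Complex.ofReal_one, ← hnorm]
    module
  have htrace : (X * X).trace = ((2 * (1 - ‖s‖ ^ 2) : ℝ) : ℂ) := by
    rw [hsq]
    simp only [trace_add, trace_sub, trace_smul, trace_vecMulVec, dotProduct_comm _ (star _), ha,
      hb, hba, smul_eq_mul]
    rw [mul_comm (star s) s, hnorm]
    push_cast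
    ring
  have hc : 0 ≤ 1 - ‖s‖ ^ 2 := by
    have := (Complex.nonneg_iff.mp (posSemidef_conjTranspose_mul_self X).trace_nonneg).1
    rw [hX, htrace, Complex.ofReal_re] at this
    linarith
  rw [traceNorm_eq_of_mul_self_mul_self hX hc hcube, htrace, Complex.ofReal_re, mul_div_assoc,
    Real.div_sqrt]

theorem exists_traceNorm_outer_mulVec_sub_outer {S m : Type*} [Fintype S] [DecidableEq S]
    [Nonempty S] [Fintype m] [DecidableEq m] {U : Matrix m S ℂ} (hU : Uᴴ * U = 1)
    {Φ : m → ℂ} (hΦ : IsUnitVec Φ) :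
    ∃ ψ : S → ℂ, IsUnitVec ψ ∧
      traceNorm (outer (U *ᵥ ψ) - outer Φ) = 2 * √(1 - (star Φ ⬝ᵥ (U * Uᴴ) *ᵥ Φ).re) := by
  set w := Uᴴ *ᵥ Φ
  have hw : star Φ ⬝ᵥ (U * Uᴴ) *ᵥ Φ = star w ⬝ᵥ w := by
    rw [star_mulVec_dotProduct, conjTranspose_conjTranspose, mulVec_mulVec]
  set c := (star w ⬝ᵥ w).re
  have hwc : star w ⬝ᵥ w = c :=
    Complex.eq_re_of_ofReal_le (r := 0) (by exact_mod_cast dotProduct_star_self_nonneg w)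
  have hc : 0 ≤ c := (Complex.nonneg_iff.mp (dotProduct_star_self_nonneg w)).1
  rw [hw, hwc, Complex.ofReal_re]
  rcases hc.eq_or_lt with hc0 | hcpos
  · obtain ⟨s₀⟩ := ‹Nonempty S›
    have hw0 : Uᴴ *ᵥ Φ = 0 :=
      dotProduct_star_self_eq_zero.mp (by rw [hwc, ← hc0, Complex.ofReal_zero])
    have hunit : IsUnitVec (Pi.single s₀ 1 : S → ℂ) := by simp [isUnitVec_iff]
    refine ⟨Pi.single s₀ 1, hunit, ?_⟩
    rw [traceNorm_outer_sub_outer (hunit.mulVec hU) hΦ, star_mulVec_dotProduct]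
    simp [hw0, ← hc0]
  · have hψw : star ((√c)⁻¹ • w) ⬝ᵥ w = (√c : ℂ) := by
      rw [star_smul, star_trivial, smul_dotProduct, hwc, Complex.real_smul, ← Complex.ofReal_mul]
      congr 1
      field_simp
      exact (Real.sq_sqrt hc).symm
    have hψ : IsUnitVec ((√c)⁻¹ • w) := by
      rw [isUnitVec_iff, dotProduct_smul, hψw, Complex.real_smul, ← Complex.ofReal_mul,
        inv_mul_cancel₀ (Real.sqrt_pos.mpr hcpos).ne', Complex.ofReal_one]
    refine ⟨(√c)⁻¹ • w, hψ, ?_⟩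
    rw [traceNorm_outer_sub_outer (hψ.mulVec hU) hΦ, star_mulVec_dotProduct, hψw,
      Complex.norm_real, Real.norm_eq_abs, sq_abs, Real.sq_sqrt hc]

end Outer

theorem IsState.nonempty {n : Type*} [Fintype n] {ρ : Matrix n n ℂ} (hρ : IsState ρ) :
    Nonempty n := by
  by_contra h
  rw [not_nonempty_iff] at h
  simpa [trace] using hρ.2

theorem IsState.exists_eq_sum_smul_outer {n : Type*} [Fintype n] [DecidableEq n]
    {τ : Matrix n n ℂ} (hτ : IsState τ) :
    ∃ (μ : n → ℝ) (v : n → n → ℂ), (∀ k, 0 ≤ μ k) ∧ ∑ k, μ k = 1 ∧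
      (∀ k, IsUnitVec (v k)) ∧ τ = ∑ k, (μ k : ℂ) • outer (v k) := by
  have hH := hτ.1.isHermitian
  let V : Matrix n n ℂ := hH.eigenvectorUnitary
  refine ⟨hH.eigenvalues, fun k x => V x k, hτ.1.eigenvalues_nonneg, ?_, fun k => ?_, ?_⟩
  · have := hH.trace_eq_sum_eigenvalues
    rw [hτ.2] at this
    simpa using (congrArg Complex.re this).symm
  · have := congr_fun₂ (Unitary.coe_star_mul_self hH.eigenvectorUnitary) k k
    simpa [mul_apply, isUnitVec_iff, dotProduct, V] using this
  · conv_lhs => rw [hH.spectral_theorem, Unitary.conjStarAlgAut_apply]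
    ext x y
    rw [mul_apply]
    simp only [mul_diagonal, Matrix.sum_apply, Matrix.smul_apply, outer, of_apply, star_apply,
      Function.comp_apply, smul_eq_mul, RCLike.ofReal_eq_complex_ofReal]
    exact Finset.sum_congr rfl fun k _ => by ring

section Tensor

variable {l : ℕ} {A : Fin l → Type*}

theorem tensorFamily_sum_smul {ι : Fin l → Type*} [∀ i, Fintype (ι i)] (c : ∀ i, ι i → ℂ)
    (N : ∀ i, ι i → Matrix (A i) (A i) ℂ) :
    tensorFamily (fun i => ∑ k, c i k • N i k) =
      ∑ K : ∀ i, ι i, (∏ i, c i (K i)) • tensorFamily (fun i => N i (K i)) := by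
  ext x y
  simp only [tensorFamily, of_apply, Matrix.sum_apply, Matrix.smul_apply, smul_eq_mul,
    Fintype.prod_sum, Finset.prod_mul_distrib]

theorem tensorFamily_outer (φ : ∀ i, A i → ℂ) :
    tensorFamily (fun i => outer (φ i)) = outer (fun x => ∏ i, φ i (x i)) := by
  ext x y
  simp [tensorFamily, outer, Finset.prod_mul_distrib]

variable [∀ i, Fintype (A i)]

theorem IsUnitVec.prod {φ : ∀ i, A i → ℂ} (hφ : ∀ i, IsUnitVec (φ i)) :
    IsUnitVec (fun x : ∀ i, A i => ∏ i, φ i (x i)) := by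
  have := Finset.prod_eq_one fun i (_ : i ∈ Finset.univ) => hφ i
  simp only [Fintype.prod_sum] at this
  simpa [IsUnitVec, star_prod, ← Finset.prod_mul_distrib] using this

end Tensor

theorem LinearMap.exists_apply_sum_smul_le_apply {E ι : Type*} [AddCommGroup E] [Module ℝ E]
    [Fintype ι] (g : E →ₗ[ℝ] ℝ) {p : ι → ℝ} (hp0 : ∀ k, 0 ≤ p k) (hp1 : ∑ k, p k = 1)
    (X : ι → E) : ∃ k, g (∑ k, p k • X k) ≤ g (X k) := by
  obtain ⟨k, -, hk⟩ := (g.convexOn convex_univ).exists_ge_of_centerMass (t := Finset.univ)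
    (fun k _ => hp0 k) (by rw [hp1]; exact one_pos) (fun k _ => Set.mem_univ (X k))
  exact ⟨k, by rwa [Finset.centerMass_eq_of_sum_1 _ _ hp1] at hk⟩

theorem SeparableFamilyState.exists_le_apply_tensorFamily_outer {l : ℕ} {A : Fin l → Type*}
    [∀ i, Fintype (A i)] [∀ i, DecidableEq (A i)] {σ : Matrix (∀ i, A i) (∀ i, A i) ℂ}
    (hσ : SeparableFamilyState σ) (g : Matrix (∀ i, A i) (∀ i, A i) ℂ →ₗ[ℝ] ℝ) :
    ∃ φ : ∀ i, A i → ℂ, (∀ i, IsUnitVec (φ i)) ∧ g σ ≤ g (tensorFamily fun i => outer (φ i)) := by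
  obtain ⟨m, p, τ, hp0, hp1, hτ, rfl⟩ := hσ
  simp_rw [Complex.coe_smul]
  obtain ⟨y, hy⟩ := g.exists_apply_sum_smul_le_apply hp0 hp1 fun y => tensorFamily (τ y)
  choose μ v hμ0 hμ1 hv hτv using fun i => (hτ y i).exists_eq_sum_smul_outer
  have hexp : tensorFamily (τ y) = ∑ K : ∀ i, A i,
      (∏ i, μ i (K i)) • tensorFamily fun i => outer (v i (K i)) := by
    simp_rw [funext hτv, tensorFamily_sum_smul, ← Complex.ofReal_prod, Complex.coe_smul]
  obtain ⟨K, hK⟩ := g.exists_apply_sum_smul_le_apply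
    (fun K : ∀ i, A i => Finset.prod_nonneg fun i _ => hμ0 i (K i))
    (by rw [← Fintype.prod_sum]; exact Finset.prod_eq_one fun i _ => hμ1 i)
    fun K : ∀ i, A i => tensorFamily fun i => outer (v i (K i))
  exact ⟨fun i => v i (K i), fun i => hv i (K i), hy.trans (hexp ▸ hK)⟩

/-- If `U : H_S → H_{A₁} ⊗ ⋯ ⊗ H_{A_l}` is an isometry, `ρ` a state
on `H_S` and `σ` a separable state with `‖UρU† − σ‖₁ ≤ δ`, then there are unit vectors
`ψ ∈ H_S`, `φ_i ∈ H_{A_i}`, with `‖U|ψ⟩⟨ψ|U† − |φ₁⟩⟨φ₁| ⊗ ⋯ ⊗ |φ_l⟩⟨φ_l|‖₁ ≤ 4√δ`. -/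
theorem stmt9 {S : Type*} [Fintype S] [DecidableEq S]
    {l : ℕ} {A : Fin l → Type*} [∀ i, Fintype (A i)] [∀ i, DecidableEq (A i)]
    (U : Matrix (∀ i, A i) S ℂ) (hU : Uᴴ * U = 1)
    (ρ : Matrix S S ℂ) (hρ : IsState ρ)
    (σ : Matrix (∀ i, A i) (∀ i, A i) ℂ) (hσ : IsState σ) (hsep : SeparableFamilyState σ)
    (δ : ℝ) (h : traceNorm (U * ρ * Uᴴ - σ) ≤ δ) :
    ∃ (ψ : S → ℂ) (φ : ∀ i, A i → ℂ),
      IsUnitVec ψ ∧ (∀ i, IsUnitVec (φ i)) ∧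
      traceNorm (U * outer ψ * Uᴴ - tensorFamily (fun i => outer (φ i)))
        ≤ 4 * Real.sqrt δ := by
  have := hρ.nonempty
  let g : Matrix (∀ i, A i) (∀ i, A i) ℂ →ₗ[ℝ] ℝ := Complex.reLm ∘ₗ
    ((traceLinearMap _ ℂ ℂ).restrictScalars ℝ ∘ₗ LinearMap.mulLeft ℝ (U * Uᴴ))
  have hg (X) : g X = (U * Uᴴ * X).trace.re := rfl
  have hgρ : g (U * ρ * Uᴴ) = 1 := by
    rw [hg, Matrix.mul_assoc U, ← Matrix.mul_assoc Uᴴ, ← Matrix.mul_assoc Uᴴ, hU, Matrix.one_mul,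
      ← Matrix.mul_assoc, trace_mul_cycle, hU, Matrix.one_mul, hρ.2, Complex.one_re]
  have hgσ : 1 - δ ≤ g σ := by
    have := re_trace_mul_le_traceNorm (posSemidef_self_mul_conjTranspose U)
      (posSemidef_one_sub_mul_conjTranspose hU)
      ((hρ.1.mul_mul_conjTranspose_same U).isHermitian.sub hσ.1.isHermitian)
    rw [← hg, map_sub, hgρ] at this
    linarith
  obtain ⟨φ, hφ, hgφ⟩ := hsep.exists_le_apply_tensorFamily_outer g
  obtain ⟨ψ, hψ, hdist⟩ := exists_traceNorm_outer_mulVec_sub_outer hU (IsUnitVec.prod hφ)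
  rw [tensorFamily_outer, hg (outer _), trace_mul_outer] at hgφ
  refine ⟨ψ, φ, hψ, hφ, ?_⟩
  rw [mul_outer_mul_conjTranspose, tensorFamily_outer, hdist]
  calc 2 * √(1 - _) ≤ 2 * √δ := by gcongr; linarith
    _ ≤ 4 * √δ := by linarith [Real.sqrt_nonneg δ]
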